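/- arXiv:1605.09662 — 3 statements merged into one kernel-verified Lean document; each statement's English description precedes it below -/
import Mathlib

section
/- If E is a divisor over a normal variety X such that a^E_• is finitely generated in degree m, then the ideal a^E_m has all positive powers integrally closed and has exactly one Rees valuation, namely ord_E. -/
/-- `x` is integral over the ideal `I`: it satisfies an equation of integral
dependence `x^n + a_1 x^{n-1} + ⋯ + a_n = 0` with `a_i ∈ I^i`. -/
def IsIntegralOverIdeal {R : Type*} [CommRing R] (I : Ideal R) (x : R) : Prop :=
  ∃ n : ℕ, 0 < n ∧ ∃ a : ℕ → R,
    (∀ i ∈ Finset.Icc 1 n, a i ∈ I ^ i) ∧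
    x ^ n + ∑ i ∈ Finset.Icc 1 n, a i * x ^ (n - i) = 0

/-! If `a_i ∈ I^i` and every element of `I` has value `≥ d`, then in an equation of integral
dependence `x^N + ∑ a_i x^(N-i) = 0` with `v x < d` every term `a_i x^(N-i)` has value
`> N • v x = v (x^N)`, which the ultrametric inequality forbids. So the integral closure of
`I^n = a^E_{mn}` lies in `{v ≥ mn} = a^E_{mn}` itself. -/

namespace AddValuation

variable {R : Type*} [CommRing R]

theorem nsmul_le_map_of_mem_pow {Γ₀ : Type*} [LinearOrderedAddCommMonoidWithTop Γ₀]
    (v : AddValuation R Γ₀) {I : Ideal R} {g : Γ₀} (hI : ∀ y ∈ I, g ≤ v y) {i : ℕ}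
    (hi : i ≠ 0) {y : R} (hy : y ∈ I ^ i) : i • g ≤ v y := by
  obtain ⟨i, rfl⟩ := Nat.exists_eq_add_one_of_ne_zero hi
  induction i generalizing y with
  | zero => simpa using hI y (by simpa using hy)
  | succ i ih =>
    rw [pow_succ'] at hy
    refine Submodule.mul_induction_on hy (fun a ha b hb => ?_) (fun _ _ => v.map_le_add)
    rw [v.map_mul, succ_nsmul']
    exact add_le_add (hI a ha) (ih i.succ_ne_zero hb)

theorem le_map_of_isIntegralOverIdeal (v : AddValuation R ℕ∞) {I : Ideal R} {d : ℕ}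
    (hI : ∀ y ∈ I, (d : ℕ∞) ≤ v y) {x : R} (hx : IsIntegralOverIdeal I x) : (d : ℕ∞) ≤ v x := by
  obtain ⟨N, -, a, ha, heq⟩ := hx
  by_contra! hlt
  lift v x to ℕ using (hlt.trans_le le_top).ne with c hc
  have hc' : c < d := by exact_mod_cast hlt
  have hterm : ∀ i ∈ Finset.Icc 1 N, ((N * c : ℕ) : ℕ∞) < v (a i * x ^ (N - i)) := by
    intro i hi
    obtain ⟨hi1, hiN⟩ := Finset.mem_Icc.mp hi
    have hai := v.nsmul_le_map_of_mem_pow hI (by omega) (ha i hi)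
    rw [v.map_mul, v.map_pow, ← hc]
    calc ((N * c : ℕ) : ℕ∞) < ((i * d + (N - i) * c : ℕ) : ℕ∞) := by
          have : i * c < i * d := Nat.mul_lt_mul_of_pos_left hc' hi1
          have : N * c = i * c + (N - i) * c := by rw [← Nat.add_mul, Nat.add_sub_cancel' hiN]
          exact_mod_cast (by omega)
      _ ≤ i • (d : ℕ∞) + (N - i) • (c : ℕ∞) := by simp [nsmul_eq_mul]
      _ ≤ v (a i) + (N - i) • (c : ℕ∞) := by gcongr
  have hsum := v.map_lt_sum' (ENat.natCast_lt_top _) hterm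
  rw [show ∑ i ∈ Finset.Icc 1 N, a i * x ^ (N - i) = -x ^ N by linear_combination heq,
    v.map_neg, v.map_pow, ← hc] at hsum
  simp [nsmul_eq_mul] at hsum

end AddValuation

theorem isIntegralOverIdeal_of_mem {R : Type*} [CommRing R] {I : Ideal R} {x : R} (hx : x ∈ I) :
    IsIntegralOverIdeal I x :=
  ⟨1, one_pos, fun _ => -x, fun i hi => by
    rw [Finset.Icc_self, Finset.mem_singleton] at hi
    simpa [hi] using hx, by simp⟩

theorem powers_integrally_closed_and_unique_rees_valuation_general
    {R : Type*} [CommRing R]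
    (v : R → ℕ∞)
    (hv0 : v 0 = ⊤)
    (hv1 : v 1 = 0)
    (hvmul : ∀ x y : R, v (x * y) = v x + v y)
    (hvadd : ∀ x y : R, min (v x) (v y) ≤ v (x + y))
    (aE : ℕ → Ideal R)
    (hmem : ∀ (l : ℕ) (f : R), f ∈ aE l ↔ (l : ℕ∞) ≤ v f)
    (m : ℕ)
    (hfg : ∀ n : ℕ, aE (m * n) = (aE m) ^ n) :
    (∀ n : ℕ, 0 < n → ∀ x : R, IsIntegralOverIdeal ((aE m) ^ n) x → x ∈ (aE m) ^ n) ∧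
    (∀ n : ℕ, 0 < n → ∀ x : R,
      IsIntegralOverIdeal ((aE m) ^ n) x ↔ ((m * n : ℕ) : ℕ∞) ≤ v x) := by
  have mem_pow_iff (n : ℕ) (x : R) : x ∈ aE m ^ n ↔ ((m * n : ℕ) : ℕ∞) ≤ v x := by
    rw [← hfg, hmem]
  have le_of_integral (n : ℕ) (x : R) (hx : IsIntegralOverIdeal (aE m ^ n) x) :
      ((m * n : ℕ) : ℕ∞) ≤ v x :=
    (AddValuation.of v hv0 hv1 hvadd hvmul).le_map_of_isIntegralOverIdeal
      (fun y => (mem_pow_iff n y).mp) hx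
  refine ⟨fun n _ x hx => (mem_pow_iff n x).mpr (le_of_integral n x hx), fun n _ x => ?_⟩
  exact ⟨le_of_integral n x, fun hx => isIntegralOverIdeal_of_mem ((mem_pow_iff n x).mpr hx)⟩

/-- **Lemma `lemrees`.** Let `E` be a divisor over a normal variety
`X`, with valuation `v = ord_E` and graded sequence `a^E_m = {f : v(f) ≥ m}`.
If `a^E_•` is finitely generated in degree `m` (i.e. `a^E_{mn} = (a^E_m)^n`), then
every positive power of `a^E_m` is integrally closed, and `a^E_m` has exactly one
Rees valuation, namely `ord_E`: the integral closure of `(a^E_m)^n` is cut out by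
the single valuation `v` via `{f : v(f) ≥ mn}`. -/
theorem powers_integrally_closed_and_unique_rees_valuation
    {R : Type*} [CommRing R]
    (v : R → ℕ∞)
    (hv0 : v 0 = ⊤)
    (hv1 : v 1 = 0)
    (hvmul : ∀ x y : R, v (x * y) = v x + v y)
    (hvadd : ∀ x y : R, min (v x) (v y) ≤ v (x + y))
    (aE : ℕ → Ideal R)
    (hmem : ∀ (l : ℕ) (f : R), f ∈ aE l ↔ (l : ℕ∞) ≤ v f)
    (m : ℕ) (hm : 0 < m)
    (hfg : ∀ n : ℕ, aE (m * n) = (aE m) ^ n) :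
    (∀ n : ℕ, 0 < n → ∀ x : R, IsIntegralOverIdeal ((aE m) ^ n) x → x ∈ (aE m) ^ n) ∧
    (∀ n : ℕ, 0 < n → ∀ x : R,
      IsIntegralOverIdeal ((aE m) ^ n) x ↔ ((m * n : ℕ) : ℕ∞) ≤ v x) :=
  powers_integrally_closed_and_unique_rees_valuation_general v hv0 hv1 hvmul hvadd aE hmem m hfg
end

section
/- Let E be a divisor over an affine variety X with associated DVR (R, m_R) ⊆ K(X) so that a^E_m = m_R^m ∩ O_X(X). If m, n are positive integers with ord_E(a^E_m) = m, then the local ring O_m of the image of the generic point of E on the blowup of X along a^E_m is contained in the corresponding local ring O_{mn} for the blowup along a^E_{mn}. -/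
/-- **Claim 1.** Let `E` be a divisor over an affine variety `X`
with ring of functions `A ⊆ K = K(X)` and DVR `(R, m_R) ⊆ K` the valuation ring of
`ν = ord_E`, so that `a^E_l = {f ∈ A : ν(f) ≥ l}`.  Suppose `ord_E(a^E_m) = m`,
witnessed by a generator `z₀` of `a^E_m = (z₀, z₁, …, z_r)` with `ν(z₀) = m`, and
let `a^E_{mn} = (z₀^n, y₁, …, y_s)`.  Then the local ring `O_m` of the image of the
generic point of `E` on the blowup of `X` along `a^E_m` — the localization of the
chart ring `A[z₁/z₀, …, z_r/z₀]` at its intersection with `m_R` — is contained in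
the corresponding local ring `O_{mn}` for the blowup along `a^E_{mn}`. -/
theorem blowup_chart_local_ring_mono
    {K : Type*} [Field K] (A : Subring K) (ν : K → ℤ)
    (hνmul : ∀ x y : K, x ≠ 0 → y ≠ 0 → ν (x * y) = ν x + ν y)
    (m n : ℕ) (hm : 0 < m) (hn : 0 < n)
    (r s : ℕ) (z0 : A) (z : Fin r → A) (y : Fin s → A)
    (hz0ne : (z0 : K) ≠ 0)
    (hz0 : ν (z0 : K) = (m : ℤ))  -- `ord_E(a^E_m) = m`
    (hgen_m : ∀ f : A, f ∈ Ideal.span (insert z0 (Set.range z)) ↔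
      ((f : K) = 0 ∨ (m : ℤ) ≤ ν (f : K)))
    (hgen_mn : ∀ f : A, f ∈ Ideal.span (insert (z0 ^ n) (Set.range y)) ↔
      ((f : K) = 0 ∨ ((m * n : ℕ) : ℤ) ≤ ν (f : K))) :
    {x : K | ∃ a b : K,
        a ∈ Subring.closure ((A : Set K) ∪ Set.range (fun i : Fin r => (z i : K) / (z0 : K))) ∧
        b ∈ Subring.closure ((A : Set K) ∪ Set.range (fun i : Fin r => (z i : K) / (z0 : K))) ∧
        b ≠ 0 ∧ ¬ 0 < ν b ∧ x = a / b} ⊆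
    {x : K | ∃ a b : K,
        a ∈ Subring.closure ((A : Set K) ∪ Set.range (fun j : Fin s => (y j : K) / (z0 : K) ^ n)) ∧
        b ∈ Subring.closure ((A : Set K) ∪ Set.range (fun j : Fin s => (y j : K) / (z0 : K) ^ n)) ∧
        b ≠ 0 ∧ ¬ 0 < ν b ∧ x = a / b} := by
  intro x hx
  obtain ⟨a, b, ha, hb, hbne, hbν, hxeq⟩ := hx
  -- the key inclusion of chart rings
  have hone : ν 1 = 0 := by
    have := hνmul 1 1 one_ne_zero one_ne_zero
    simp at this; linarith
  have hpow : ∀ k : ℕ, ν ((z0 : K) ^ k) = (k : ℤ) * m := by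
    intro k
    induction k with
    | zero => simpa using hone
    | succ k ih =>
        have := hνmul ((z0:K)^k) (z0:K) (pow_ne_zero _ hz0ne) hz0ne
        rw [← pow_succ] at this
        push_cast
        rw [this, ih, hz0]; ring
  have hsub : Subring.closure ((A : Set K) ∪ Set.range (fun i : Fin r => (z i : K) / (z0 : K)))
      ≤ Subring.closure ((A : Set K) ∪ Set.range (fun j : Fin s => (y j : K) / (z0 : K) ^ n)) := by
    apply Subring.closure_le.mpr
    rintro t (ht | ⟨i, rfl⟩)
    · exact Subring.subset_closure (Or.inl ht)
    by_cases hzi : (z i : K) = 0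
    · simp only [hzi, zero_div]
      exact zero_mem _
    -- ν (z i) ≥ m
    have hνzi : (m : ℤ) ≤ ν (z i : K) := by
      have hmem : z i ∈ Ideal.span (insert z0 (Set.range z)) :=
        Ideal.subset_span (Set.mem_insert_iff.mpr (Or.inr ⟨i, rfl⟩))
      rcases (hgen_m (z i)).mp hmem with h | h
      · exact absurd h hzi
      · exact h
    -- z i * z0^(n-1) ∈ a^E_{mn}
    have hmem2 : z i * z0 ^ (n - 1) ∈ Ideal.span (insert (z0 ^ n) (Set.range y)) := by
      apply (hgen_mn _).mpr
      right
      have hcast : ((z i * z0 ^ (n-1) : A) : K) = (z i : K) * (z0 : K) ^ (n-1) := by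
        push_cast; ring
      rw [hcast, hνmul _ _ hzi (pow_ne_zero _ hz0ne), hpow]
      have : ((n : ℤ) - 1) * m ≤ ((n - 1 : ℕ) : ℤ) * m := by
        have : (n : ℤ) - 1 ≤ ((n - 1 : ℕ) : ℤ) := by omega
        exact mul_le_mul_of_nonneg_right this (by positivity)
      push_cast
      nlinarith [hνzi, this]
    rw [Ideal.mem_span_insert] at hmem2
    obtain ⟨c, w, hw, heq⟩ := hmem2
    rw [Ideal.span, Submodule.mem_span_range_iff_exists_fun] at hw
    obtain ⟨cf, hcf⟩ := hw
    -- express z i / z0 in terms of the new chart generators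
    have hz0n1 : (z0 : K) ^ (n - 1) ≠ 0 := pow_ne_zero _ hz0ne
    have h1 : (z i : K) * (z0 : K) ^ (n - 1) = (c : K) * (z0 : K) ^ n + (w : K) := by
      have := congrArg (fun t : A => (t : K)) heq
      push_cast at this
      exact this
    have h2 : ((w : A) : K) = ∑ j, (cf j : K) * (y j : K) := by
      rw [← hcf]
      push_cast [smul_eq_mul]
      rfl
    have key : ((c : K) + ∑ j, (cf j : K) * ((y j : K) / (z0 : K) ^ n)) * (z0 : K) ^ n
        = (z i : K) * (z0 : K) ^ (n - 1) := by
      rw [add_mul, Finset.sum_mul]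
      have hterm : ∀ j ∈ Finset.univ, (cf j : K) * ((y j : K) / (z0 : K) ^ n) * (z0 : K) ^ n
          = (cf j : K) * (y j : K) := by
        intro j _
        field_simp
      rw [Finset.sum_congr rfl hterm, h1, h2]
    have hKeq : (z i : K) / (z0 : K) =
        (c : K) + ∑ j, (cf j : K) * ((y j : K) / (z0 : K) ^ n) := by
      rw [div_eq_iff hz0ne]
      apply mul_right_cancel₀ hz0n1
      have hps : (z0 : K) * (z0 : K) ^ (n - 1) = (z0 : K) ^ n := by
        rw [← pow_succ']
        congr 1
        omega
      rw [mul_assoc, hps, key]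
    show ((z i : K) / (z0 : K)) ∈ _
    rw [hKeq]
    apply add_mem
    · exact Subring.subset_closure (Or.inl c.2)
    · apply Subring.sum_mem
      intro j _
      exact mul_mem (Subring.subset_closure (Or.inl (cf j).2))
        (Subring.subset_closure (Or.inr ⟨j, rfl⟩))
  exact ⟨a, b, hsub ha, hsub hb, hbne, hbν, hxeq⟩
end

section
/- Let f : Y → X be a log resolution of a pair (X, a^λ) on a klt variety X, with a·O_Y = O_Y(−D) and K_Y + Δ_Y = f*(K_X) + λD. Suppose the coefficients of Δ_Y are ≤ 1 with equality precisely along a single exceptional divisor E. Then for every divisor F over X with F ≠ E, one has k_E + 1 < (k_F + 1)/ord_F(a^E_•). -/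
/-- Let `f : Y → X` be a log resolution of a pair `(X, a^λ)` on a
klt variety `X`, with `a·O_Y = O_Y(−D)` and `K_Y + Δ_Y = f*(K_X) + λD`, where the
coefficients of `Δ_Y` are `≤ 1` with equality precisely along a single exceptional
divisor `E`.  Numerically this means `a_E(X, a^λ) = 0`, i.e. `k_E + 1 = λ·ord_E(a)`,
and `a_F(X, a^λ) > 0`, i.e. `λ·ord_F(a) < k_F + 1`, for every divisor `F ≠ E`;
moreover `ord_E(a) = N` is a positive integer with `a ⊆ a^E_N`.  Then for every
divisor `F ≠ E` over `X` one has `k_E + 1 < (k_F + 1)/ord_F(a^E_•)`, stated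
multiplicatively as `(k_E + 1)·ord_F(a^E_•) < k_F + 1`, where
`ord_F(a^E_•) = inf_{m≥1} ord_F(a^E_m)/m`. -/
theorem kE_add_one_lt_ratio_of_unique_lc_place
    {R : Type*} [CommRing R] (D : Type*)
    (k : D → ℝ) (ord : D → Ideal R → ℝ)
    (a : Ideal R) (aE : ℕ → Ideal R) (E : D) (l : ℝ)
    (hklt : ∀ F : D, 0 < k F + 1)
    (hnonneg : ∀ (F : D) (I : Ideal R), 0 ≤ ord F I)
    (hanti : ∀ F : D, Antitone (ord F))
    (hl : 0 < l)
    (N : ℕ) (hNpos : 0 < N) (hN : (N : ℝ) = ord E a) (hsubN : a ≤ aE N)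
    (hE : k E + 1 = l * ord E a)
    (hF : ∀ F : D, F ≠ E → l * ord F a < k F + 1) :
    ∀ F : D, F ≠ E →
      (k E + 1) * (⨅ m : ℕ+, ord F (aE (m : ℕ)) / ((m : ℕ) : ℝ)) < k F + 1 := by
  intro F hFE
  have hNne : ((N : ℕ) : ℝ) ≠ 0 := Nat.cast_ne_zero.mpr hNpos.ne'
  have hbdd : BddBelow (Set.range fun m : ℕ+ => ord F (aE (m : ℕ)) / ((m : ℕ) : ℝ)) := by
    refine ⟨0, ?_⟩
    rintro x ⟨m, rfl⟩
    exact div_nonneg (hnonneg F _) (by positivity)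
  have h1 : (⨅ m : ℕ+, ord F (aE (m : ℕ)) / ((m : ℕ) : ℝ)) ≤ ord F (aE N) / (N : ℝ) :=
    ciInf_le hbdd ⟨N, hNpos⟩
  have hkE : k E + 1 = l * N := by rw [hE, hN]
  have h2 : (k E + 1) * (⨅ m : ℕ+, ord F (aE (m : ℕ)) / ((m : ℕ) : ℝ))
      ≤ (k E + 1) * (ord F (aE N) / (N : ℝ)) :=
    mul_le_mul_of_nonneg_left h1 (hklt E).le
  have h3 : (k E + 1) * (ord F (aE N) / (N : ℝ)) = l * ord F (aE N) := by
    rw [hkE]; field_simp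
  have h4 : l * ord F (aE N) ≤ l * ord F a :=
    mul_le_mul_of_nonneg_left (hanti F hsubN) hl.le
  calc (k E + 1) * (⨅ m : ℕ+, ord F (aE (m : ℕ)) / ((m : ℕ) : ℝ))
      ≤ l * ord F (aE N) := h3 ▸ h2
    _ ≤ l * ord F a := h4
    _ < k F + 1 := hF F hFE
end
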